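/- Let A ∈ ℍ[t] be a nonzero quaternion polynomial of degree at most 1. Then there exist a unit vector u ∈ ℝ³ and a constant c ∈ ℝ such that for all t ∈ ℝ, ⟨F(t), u⟩ = c·‖A(t)‖², where F(t) ∈ ℝ³ is the vector part of A(t)·i·star(A(t)). Since ‖F(t)‖ = ‖A(t)‖², the tangent field F(t) therefore forms a constant angle with the fixed direction u wherever A(t) ≠ 0; curves with such tangent fields are curves of constant slope (slant helices). -/

import Mathlib

/-!
Write `A(t) = q * y(t)` with `q ≠ 0` fixed and every `y(t)` commuting with one fixed nonzero
pure quaternion `V`: if `A = b X + a` with `b ≠ 0`, take `q = b`, `y(t) = b⁻¹a + t` and for `V` the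
vector part of `b⁻¹a` (or `i` if `b⁻¹a` is real). Conjugation `p ↦ q p q̄` multiplies the inner
product of `ℍ` by `‖q‖⁴`, and `⟪y p ȳ, V⟫ = ‖y‖² ⟪p, V⟫` as `ȳ` commutes with `V̄`. Hence
`⟪A(t) i Ā(t), q V q̄⟫ = ‖q‖² ‖A(t)‖² ⟪i, V⟫`, and `u` is the normalized vector part of `q V q̄`.
-/

open scoped RealInnerProductSpace

/-- The quaternion unit `i`. -/
def quatI : Quaternion ℝ := ⟨0, 1, 0, 0⟩

/-- The vector part of a quaternion, identified with a vector of Euclidean 3-space. -/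
noncomputable def quatVec (x : Quaternion ℝ) : EuclideanSpace ℝ (Fin 3) :=
  (WithLp.equiv 2 (Fin 3 → ℝ)).symm ![x.imI, x.imJ, x.imK]

open Quaternion

namespace Quaternion

section CommRing

variable {R : Type*} [CommRing R]

theorem re_mul_comm (a b : ℍ[R]) : (a * b).re = (b * a).re := by
  simp only [re_mul]; ring

theorem re_mul_mul_star (q a : ℍ[R]) : (q * a * star q).re = normSq q * a.re := by
  rw [re_mul_comm, ← mul_assoc, star_mul_self, coe_mul_eq_smul, re_smul, smul_eq_mul]

theorem exists_ne_zero_re_eq_zero_commute [Nontrivial R] (z : ℍ[R]) :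
    ∃ V : ℍ[R], V.re = 0 ∧ V ≠ 0 ∧ Commute z V := by
  by_cases hz : z.im = 0
  · refine ⟨⟨0, 1, 0, 0⟩, rfl, fun h => one_ne_zero (QuaternionAlgebra.mk.inj h).2.1, ?_⟩
    rw [← re_add_im z, hz, add_zero]
    exact coe_commute _ _
  · refine ⟨z.im, re_im z, hz, ?_⟩
    conv_lhs => rw [← re_add_im z]
    exact (coe_commute _ _).add_left (Commute.refl _)

end CommRing

theorem inner_mul_mul_star_mul_mul_star (q a b : ℍ) :
    ⟪q * a * star q, q * b * star q⟫ = normSq q ^ 2 * ⟪a, b⟫ := by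
  have h : q * a * star q * star (q * b * star q) = q * (a * (star q * q) * star b) * star q := by
    simp only [star_mul, star_star]; noncomm_ring
  rw [inner_def, inner_def, h, re_mul_mul_star, star_mul_self, ← coe_commutes, mul_assoc,
    coe_mul_eq_smul, re_smul, smul_eq_mul, pow_two, mul_assoc]

theorem inner_mul_mul_star_of_commute {y V : ℍ} (a : ℍ) (h : Commute y V) :
    ⟪y * a * star y, V⟫ = normSq y * ⟪a, V⟫ := by
  have h' : y * a * star y * star V = y * (a * star V) * star y := by
    rw [mul_assoc, mul_assoc, h.star_star.eq, ← mul_assoc a, mul_assoc y]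
  rw [inner_def, inner_def, h', re_mul_mul_star]

theorem inner_mul_mul_star_mul_mul_star_of_commute {y V : ℍ} (q a : ℍ) (h : Commute y V) :
    ⟪q * y * a * star (q * y), q * V * star q⟫ = normSq q * normSq (q * y) * ⟪a, V⟫ := by
  have hconj : q * y * a * star (q * y) = q * (y * a * star y) * star q := by
    simp only [star_mul]; noncomm_ring
  rw [hconj, inner_mul_mul_star_mul_mul_star, inner_mul_mul_star_of_commute a h, map_mul]
  ring

end Quaternion

theorem inner_quatVec_of_re_eq_zero (x : ℍ) {U : ℍ} (hU : U.re = 0) :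
    ⟪quatVec x, quatVec U⟫ = ⟪x, U⟫ := by
  simp only [quatVec, WithLp.equiv_symm_apply, PiLp.inner_apply, RCLike.inner_apply,
    Real.ringHom_apply, Fin.sum_univ_three, Fin.isValue, Matrix.cons_val_zero,
    Matrix.cons_val_one, Matrix.cons_val, inner_def, re_mul, re_star, hU, mul_zero, imI_star,
    mul_neg, sub_neg_eq_add, zero_add, imJ_star, imK_star]
  ring

theorem quatVec_ne_zero {U : ℍ} (hre : U.re = 0) (hU : U ≠ 0) : quatVec U ≠ 0 := by
  intro h
  have hself := inner_quatVec_of_re_eq_zero U hre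
  rw [h, inner_zero_left, eq_comm, inner_self_eq_zero] at hself
  exact hU hself

theorem Polynomial.exists_eval_eq_mul_commute_of_natDegree_le_one {A : Polynomial ℍ}
    (hA : A ≠ 0) (hdeg : A.natDegree ≤ 1) :
    ∃ q V : ℍ, q ≠ 0 ∧ V.re = 0 ∧ V ≠ 0 ∧
      ∀ t : ℝ, ∃ y : ℍ, A.eval (t : ℍ) = q * y ∧ Commute y V := by
  obtain ⟨b, a, rfl⟩ := exists_eq_X_add_C_of_natDegree_le_one hdeg
  rcases eq_or_ne b 0 with rfl | hb
  · have ha : a ≠ 0 := by rintro rfl; simp at hA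
    obtain ⟨V, hVre, hV0, -⟩ := exists_ne_zero_re_eq_zero_commute a
    exact ⟨a, V, ha, hVre, hV0, fun t => ⟨1, by simp, Commute.one_left V⟩⟩
  · obtain ⟨V, hVre, hV0, hV⟩ := exists_ne_zero_re_eq_zero_commute (b⁻¹ * a)
    refine ⟨b, V, hb, hVre, hV0, fun t => ⟨b⁻¹ * a + t, ?_, hV.add_left (coe_commute t V)⟩⟩
    simp [mul_add, hb, add_comm]

/-- For a nonzero quaternion polynomial `A` of degree at most one there are a
unit vector `u ∈ ℝ³` and a constant `c ∈ ℝ` with `⟨F(t), u⟩ = c·‖A(t)‖²` for all `t`, where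
`F(t)` is the vector part of `A(t)·i·star A(t)`; since `‖F(t)‖ = ‖A(t)‖²`, the tangent field
`F` makes a constant angle with the fixed direction `u` (a curve of constant slope). -/
theorem slant_helix_of_linear_quaternion_polynomial (A : Polynomial (Quaternion ℝ))
    (hA : A ≠ 0) (hdeg : A.natDegree ≤ 1) :
    ∃ (u : EuclideanSpace ℝ (Fin 3)) (c : ℝ), ‖u‖ = 1 ∧
      ∀ t : ℝ,
        (inner (𝕜 := ℝ) (quatVec (A.eval (t : Quaternion ℝ) * quatI * star (A.eval (t : Quaternion ℝ)))) u : ℝ) =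
          c * ‖A.eval (t : Quaternion ℝ)‖ ^ 2 := by
  obtain ⟨q, V, hq, hVre, hV0, hfactor⟩ :=
    A.exists_eval_eq_mul_commute_of_natDegree_le_one hA hdeg
  set U := q * V * star q
  have hUre : U.re = 0 := by rw [re_mul_mul_star, hVre, mul_zero]
  have hU : quatVec U ≠ 0 := quatVec_ne_zero hUre (by simp [U, hq, hV0])
  refine ⟨‖quatVec U‖⁻¹ • quatVec U, ‖quatVec U‖⁻¹ * (normSq q * ⟪quatI, V⟫),
    norm_smul_inv_norm hU, fun t => ?_⟩
  obtain ⟨y, hy, hyV⟩ := hfactor t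
  rw [real_inner_smul_right, inner_quatVec_of_re_eq_zero _ hUre, hy,
    inner_mul_mul_star_mul_mul_star_of_commute q quatI hyV, normSq_eq_norm_mul_self (q * y)]
  ring
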